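/- η-greedy variant of the rollout bound: under the hypotheses of the rollout performance bound, except that the policy π satisfies only the η-approximate greedy condition f(x', π(x')) + ∫ V(F(x', π(x'), w)) dμ(w) ≤ (TV)(x') + η for every nonterminal x' (for some η ≥ 0), and π is proper from x, it holds that J^π(x) − V*(x) ≤ (2ε + η) · E[τ]. -/

import Mathlib

open MeasureTheory ProbabilityTheory Filter
open scoped ENNReal

open Classical in
/-- Bellman operator of the SSP: `(T V)(x) = inf_{u ∈ U(x)} ( f(x,u) + ∫ V(F(x,u,w)) dμ(w) )`
for nonterminal `x`, and `(T V)(t) = 0`. -/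
noncomputable def bellman {X U W : Type*} [MeasurableSpace W] (μ : Measure W)
    (t : X) (Ua : X → Set U) (f : X → U → ℝ) (F : X → U → W → X)
    (V : X → ℝ) (x : X) : ℝ :=
  if x = t then 0 else ⨅ u : Ua x, (f x (u : U) + ∫ w, V (F x (u : U) w) ∂μ)

/-- Closed-loop trajectory driven by a disturbance sequence `ω : ℕ → W`:
`x₀ = x`, `x_{k+1} = F(x_k, π(x_k), ω_k)`. -/
def traj {X U W : Type*} (F : X → U → W → X) (π : X → U) (x : X) (ω : ℕ → W) : ℕ → X
  | 0 => x
  | k + 1 => F (traj F π x ω k) (π (traj F π x ω k)) (ω k)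

/-- The trajectory as a family of random variables on an abstract sample space `Ω`,
given the disturbance random variables `ξ k : Ω → W`. -/
def trajOn {X U W Ω : Type*} (F : X → U → W → X) (π : X → U) (x : X)
    (ξ : ℕ → Ω → W) (k : ℕ) (ω : Ω) : X :=
  traj F π x (fun i => ξ i ω) k

/-- Hitting time `τ = inf { k ≥ 0 : x_k = t }` of the terminal state (`∞` if never reached),
valued in `ℝ≥0∞`. -/
noncomputable def hitTime {X Ω : Type*} (t : X) (Y : ℕ → Ω → X) (ω : Ω) : ℝ≥0∞ :=
  ⨅ (k : ℕ) (_ : Y k ω = t), (k : ℝ≥0∞)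

/-- Total expected cost `J = E[ Σ_{k=0}^{τ-1} f(x_k, π(x_k)) ]` (in `ℝ≥0∞`; the stage cost
is nonnegative). -/
noncomputable def totalCost {X U Ω : Type*} [MeasurableSpace Ω] (P : Measure Ω)
    (t : X) (f : X → U → ℝ) (π : X → U) (Y : ℕ → Ω → X) : ℝ≥0∞ :=
  ∫⁻ ω, ∑' (k : ℕ), (if (k : ℝ≥0∞) < hitTime t Y ω
    then ENNReal.ofReal (f (Y k ω) (π (Y k ω))) else 0) ∂P

/-- Expected hitting time `E[τ]` (in `ℝ≥0∞`). -/
noncomputable def expHit {X Ω : Type*} [MeasurableSpace Ω] (P : Measure Ω)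
    (t : X) (Y : ℕ → Ω → X) : ℝ≥0∞ :=
  ∫⁻ ω, hitTime t Y ω ∂P

/-!
`V*` is a Lyapunov function for the closed loop: since `π` is η-greedy for `V` and
`‖V - V*‖∞ ≤ ε`, one step from a nonterminal `y` satisfies
`f(y, π y) + E V*(next state) ≤ V*(y) + 2ε + η`. The state `x_k` is independent of `w_k`, so
taking expectations along the trajectory and telescoping gives
`Σ_{k<n} E f(x_k, π x_k) + E V*(x_n) ≤ V*(x) + (2ε + η) Σ_{k<n} P(x_k ≠ t)`.
Properness makes `E V*(x_n) → 0` by dominated convergence, and `Σ_k P(x_k ≠ t) = E τ`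
because the terminal state is absorbing.
-/

open Finset

lemma sum_range_le_of_telescoping {a b v : ℕ → ℝ} {B : ℝ} (ha : ∀ k, 0 ≤ a k)
    (hstep : ∀ k, a k + v (k + 1) ≤ v k + b k) (hb : ∀ n, ∑ k ∈ range n, b k ≤ B)
    (hv : Tendsto v atTop (nhds 0)) (n : ℕ) :
    ∑ k ∈ range n, a k ≤ v 0 + B := by
  have hpartial : ∀ m, ∑ k ∈ range m, a k ≤ v 0 + B - v m := fun m => by
    calc ∑ k ∈ range m, a k ≤ ∑ k ∈ range m, (v k - v (k + 1) + b k) :=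
          sum_le_sum fun k _ => by linarith [hstep k]
      _ = v 0 - v m + ∑ k ∈ range m, b k := by rw [sum_add_distrib, sum_range_sub']
      _ ≤ v 0 + B - v m := by linarith [hb m]
  refine ge_of_tendsto (by simpa using (hv.const_sub (v 0 + B))) ?_
  filter_upwards [eventually_ge_atTop n] with m hm
  exact (sum_le_sum_of_subset_of_nonneg (range_subset_range.2 hm) fun k _ _ => ha k).trans
    (hpartial m)

lemma coe_tsum_ofReal_le_of_telescoping {a v : ℕ → ℝ} {b : ℕ → ℝ≥0∞} (ha : ∀ k, 0 ≤ a k)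
    (hstep : ∀ k, a k + v (k + 1) ≤ v k + (b k).toReal) (hv : Tendsto v atTop (nhds 0)) :
    ((∑' k, ENNReal.ofReal (a k) : ℝ≥0∞) : EReal)
      ≤ (v 0 : EReal) + ((∑' k, b k : ℝ≥0∞) : EReal) := by
  by_cases hB : ∑' k, b k = ⊤
  · simp [hB]
  have hb : ∀ n, ∑ k ∈ range n, (b k).toReal ≤ (∑' k, b k).toReal := fun n => by
    rw [← ENNReal.toReal_sum fun k _ => ne_top_of_le_ne_top hB (ENNReal.le_tsum k)]
    exact ENNReal.toReal_mono hB (ENNReal.sum_le_tsum _)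
  have hbound := sum_range_le_of_telescoping ha hstep hb hv
  have hJ : ∑' k, ENNReal.ofReal (a k) ≤ ENNReal.ofReal (v 0 + (∑' k, b k).toReal) := by
    rw [ENNReal.tsum_eq_iSup_nat]
    refine iSup_le fun n => ?_
    rw [← ENNReal.ofReal_sum_of_nonneg fun k _ => ha k]
    exact ENNReal.ofReal_le_ofReal (hbound n)
  calc ((∑' k, ENNReal.ofReal (a k) : ℝ≥0∞) : EReal)
      ≤ ((ENNReal.ofReal (v 0 + (∑' k, b k).toReal) : ℝ≥0∞) : EReal) :=
        EReal.coe_ennreal_le_coe_ennreal_iff.2 hJ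
    _ = (v 0 : EReal) + ((∑' k, b k : ℝ≥0∞) : EReal) := by
      rw [EReal.coe_ennreal_ofReal, max_eq_left (by simpa using hbound 0), EReal.coe_add,
        ← EReal.coe_ennreal_toReal hB]

section Bellman

variable {X U W : Type*} [MeasurableSpace W] {μ : Measure W}

lemma abs_integral_le_of_forall_abs_le [IsProbabilityMeasure μ] {g : W → ℝ} {C : ℝ}
    (hg : ∀ w, |g w| ≤ C) : |∫ w, g w ∂μ| ≤ C := by
  simpa using norm_integral_le_of_norm_le_const (μ := μ) (f := g) (Eventually.of_forall hg)

lemma abs_integral_sub_le_of_forall_abs_sub_le [IsProbabilityMeasure μ] {g h : W → ℝ}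
    (hg : Integrable g μ) (hh : Integrable h μ) {ε : ℝ} (hgh : ∀ w, |g w - h w| ≤ ε) :
    |∫ w, g w ∂μ - ∫ w, h w ∂μ| ≤ ε := by
  rw [← integral_sub hg hh]
  exact abs_integral_le_of_forall_abs_le hgh

variable {t : X} {Ua : X → Set U} {f : X → U → ℝ} {F : X → U → W → X}

lemma bellman_le_add_of_integral_le {V V' : X → ℝ} {ε : ℝ} {y : X} (hy : y ≠ t)
    (hne : (Ua y).Nonempty)
    (hbdd : BddBelow (Set.range fun u : Ua y => f y u + ∫ w, V (F y u w) ∂μ))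
    (hVV' : ∀ u ∈ Ua y, ∫ w, V (F y u w) ∂μ ≤ ∫ w, V' (F y u w) ∂μ + ε) :
    bellman μ t Ua f F V y ≤ bellman μ t Ua f F V' y + ε := by
  have := hne.to_subtype
  rw [bellman, bellman, if_neg hy, if_neg hy, ← sub_le_iff_le_add]
  exact le_ciInf fun u => by linarith [ciInf_le hbdd u, hVV' u u.2]

lemma qfactor_le_add_of_approx_greedy [IsProbabilityMeasure μ] {Vstar V : X → ℝ} {π : X → U}
    {ε η C : ℝ} {y : X} (hy : y ≠ t) (hfnn : ∀ u, 0 ≤ f y u) (hC : ∀ z, |Vstar z| ≤ C)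
    (hVsfix : Vstar y = bellman μ t Ua f F Vstar y)
    (hVsint : ∀ u, Integrable (fun w => Vstar (F y u w)) μ)
    (hVint : ∀ u, Integrable (fun w => V (F y u w)) μ) (happrox : ∀ z, |V z - Vstar z| ≤ ε)
    (hπ : π y ∈ Ua y)
    (hgreedy : f y (π y) + ∫ w, V (F y (π y) w) ∂μ ≤ bellman μ t Ua f F V y + η) :
    f y (π y) + ∫ w, Vstar (F y (π y) w) ∂μ ≤ Vstar y + (2 * ε + η) := by
  have hint (u : U) : |∫ w, V (F y u w) ∂μ - ∫ w, Vstar (F y u w) ∂μ| ≤ ε :=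
    abs_integral_sub_le_of_forall_abs_sub_le (hVint u) (hVsint u) fun w => happrox _
  have hbdd : BddBelow (Set.range fun u : Ua y => f y u + ∫ w, V (F y u w) ∂μ) := by
    refine ⟨-C - ε, ?_⟩
    rintro _ ⟨u, rfl⟩
    have hVs := abs_integral_le_of_forall_abs_le (μ := μ) fun w => hC (F y u w)
    linarith [hfnn u, (abs_le.1 (hint u)).1, (abs_le.1 hVs).1]
  have hbellman : bellman μ t Ua f F V y ≤ Vstar y + ε :=
    hVsfix ▸ bellman_le_add_of_integral_le hy ⟨_, hπ⟩ hbdd fun u _ => by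
      linarith [(abs_le.1 (hint u)).2]
  linarith [(abs_le.1 (hint (π y))).1]

end Bellman

section Independence

variable {Ω X W : Type*} [MeasurableSpace Ω] [MeasurableSpace X] [MeasurableSpace W]
  {P : Measure Ω} [IsProbabilityMeasure P] {μ : Measure W} [IsProbabilityMeasure μ]

lemma ProbabilityTheory.IndepFun.integral_comp_eq_integral_integral {A : Ω → X} {B : Ω → W}
    (hAB : IndepFun A B P) (hA : Measurable A) (hB : Measurable B) (hlaw : P.map B = μ)
    {h : X × W → ℝ} (hh : Measurable h) {C : ℝ} (hC : ∀ q, |h q| ≤ C) :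
    ∫ ω, h (A ω, B ω) ∂P = ∫ ω, ∫ w, h (A ω, w) ∂μ ∂P := by
  have hpair : P.map (fun ω => (A ω, B ω)) = (P.map A).prod μ := by
    rw [← hlaw]
    exact (indepFun_iff_map_prod_eq_prod_map_map hA.aemeasurable hB.aemeasurable).1 hAB
  have := Measure.isProbabilityMeasure_map (μ := P) hA.aemeasurable
  have hint : Integrable h ((P.map A).prod μ) :=
    .of_bound hh.aestronglyMeasurable C (Eventually.of_forall hC)
  rw [← integral_map (hA.prodMk hB).aemeasurable hh.aestronglyMeasurable, hpair,
    integral_prod h hint,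
    integral_map hA.aemeasurable hh.stronglyMeasurable.integral_prod_right'.aestronglyMeasurable]

end Independence

section Trajectory

variable {X U W : Type*} {F : X → U → W → X} {π : X → U} {x : X}

lemma traj_congr {ω ω' : ℕ → W} :
    ∀ {k}, (∀ i < k, ω i = ω' i) → traj F π x ω k = traj F π x ω' k
  | 0, _ => rfl
  | k + 1, h => by
    simp only [traj, traj_congr fun i hi => h i (Nat.lt_succ_of_lt hi), h k k.lt_succ_self]

lemma traj_eq_of_le {t : X} (hFt : ∀ w, F t (π t) w = t) (ω : ℕ → W) {k m : ℕ} (hkm : k ≤ m)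
    (hk : traj F π x ω k = t) : traj F π x ω m = t := by
  induction m, hkm using Nat.le_induction with
  | base => exact hk
  | succ m _ ih => rw [traj, ih, hFt]

variable [MeasurableSpace X] [MeasurableSpace W]

lemma measurable_traj (hFπ : Measurable fun q : X × W => F q.1 (π q.1) q.2) :
    ∀ k, Measurable fun ω : ℕ → W => traj F π x ω k
  | 0 => measurable_const
  | k + 1 => hFπ.comp ((measurable_traj hFπ k).prodMk (measurable_pi_apply k))

lemma exists_measurable_traj_eq_comp_prefix [Nonempty W]
    (hFπ : Measurable fun q : X × W => F q.1 (π q.1) q.2) (k : ℕ) :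
    ∃ φ : (range k → W) → X, Measurable φ ∧ ∀ ω : ℕ → W, traj F π x ω k = φ fun i => ω i := by
  let extend : (range k → W) → ℕ → W := fun v i =>
    if h : i ∈ range k then v ⟨i, h⟩ else Classical.arbitrary W
  have hextend : Measurable extend := measurable_pi_lambda _ fun i => by
    by_cases h : i ∈ range k
    · simpa only [extend, h, dite_true] using measurable_pi_apply _
    · simp only [extend, h, dite_false, measurable_const]
  refine ⟨fun v => traj F π x (extend v) k, (measurable_traj hFπ k).comp hextend,
    fun ω => traj_congr fun i hi => ?_⟩
  simp [extend, hi]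

variable {Ω : Type*} [MeasurableSpace Ω] {P : Measure Ω} {ξ : ℕ → Ω → W}

lemma measurable_trajOn (hFπ : Measurable fun q : X × W => F q.1 (π q.1) q.2)
    (hξ : ∀ k, Measurable (ξ k)) (k : ℕ) : Measurable (trajOn F π x ξ k) :=
  (measurable_traj hFπ k).comp (measurable_pi_lambda _ hξ)

lemma indepFun_trajOn [Nonempty W] (hFπ : Measurable fun q : X × W => F q.1 (π q.1) q.2)
    (hξ : ∀ k, Measurable (ξ k)) (hind : iIndepFun ξ P) (k : ℕ) :
    IndepFun (trajOn F π x ξ k) (ξ k) P := by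
  obtain ⟨φ, hφ, hφeq⟩ := exists_measurable_traj_eq_comp_prefix (x := x) hFπ k
  have hprefix := (hind.indepFun_finset (range k) {k} (by simp) hξ).comp hφ
    (measurable_pi_apply ⟨k, mem_singleton_self k⟩)
  convert hprefix using 1
  · funext ω
    exact hφeq _
  · rfl

lemma integral_comp_trajOn_succ [IsProbabilityMeasure P] {μ : Measure W} [IsProbabilityMeasure μ]
    (hFπ : Measurable fun q : X × W => F q.1 (π q.1) q.2) (hξ : ∀ k, Measurable (ξ k))
    (hind : iIndepFun ξ P) (hlaw : ∀ k, P.map (ξ k) = μ) {h : X → ℝ} (hh : Measurable h)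
    {C : ℝ} (hC : ∀ y, |h y| ≤ C) (k : ℕ) :
    ∫ ω, h (trajOn F π x ξ (k + 1) ω) ∂P
      = ∫ ω, ∫ w, h (F (trajOn F π x ξ k ω) (π (trajOn F π x ξ k ω)) w) ∂μ ∂P :=
  have := nonempty_of_isProbabilityMeasure μ
  (indepFun_trajOn hFπ hξ hind k).integral_comp_eq_integral_integral
    (measurable_trajOn hFπ hξ k) (hξ k) (hlaw k) (hh.comp hFπ) fun _ => hC _

end Trajectory

section HitTime

variable {X Ω : Type*} {t : X} {Y : ℕ → Ω → X} {ω : Ω}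

lemma hitTime_le {k : ℕ} (hk : Y k ω = t) : hitTime t Y ω ≤ k :=
  iInf₂_le k hk

lemma hitTime_lt_top_iff : hitTime t Y ω < ⊤ ↔ ∃ k, Y k ω = t := by
  simp [hitTime, iInf_lt_iff]

lemma lt_hitTime_iff (habs : ∀ k m, k ≤ m → Y k ω = t → Y m ω = t) {k : ℕ} :
    (k : ℝ≥0∞) < hitTime t Y ω ↔ Y k ω ≠ t := by
  refine ⟨fun hlt hk => (hitTime_le hk).not_gt hlt, fun hk => ?_⟩
  refine (ENNReal.lt_add_right (ENNReal.natCast_ne_top k) one_ne_zero).trans_le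
    (le_iInf₂ fun j hj => ?_)
  have hkj : k < j := lt_of_not_ge fun hjk => hk (habs j k hjk hj)
  exact_mod_cast hkj

lemma hitTime_eq_tsum_indicator (habs : ∀ k m, k ≤ m → Y k ω = t → Y m ω = t) :
    hitTime t Y ω = ∑' k, {ω | Y k ω ≠ t}.indicator 1 ω := by
  classical
  by_cases hfin : ∃ k, Y k ω = t
  · obtain ⟨n, hY⟩ : ∃ n, ∀ k, Y k ω = t ↔ n ≤ k :=
      ⟨Nat.find hfin, fun k => ⟨Nat.find_min' hfin, fun hk => habs _ k hk (Nat.find_spec hfin)⟩⟩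
    have hτ : hitTime t Y ω = n :=
      le_antisymm (hitTime_le ((hY n).2 le_rfl))
        (le_iInf₂ fun j hj => by exact_mod_cast (hY j).1 hj)
    rw [hτ, tsum_eq_sum (s := range n) fun k hk => by
      simp [hY, not_lt.1 (mt mem_range.2 hk)]]
    simp +contextual [Set.indicator_apply, hY, filter_true_of_mem]
  · simp only [not_exists] at hfin
    simp [hitTime, hfin]

variable [MeasurableSpace X] [MeasurableSpace Ω] {P : Measure Ω}

lemma expHit_eq_tsum [MeasurableSingletonClass X] (hY : ∀ k, Measurable (Y k))
    (habs : ∀ ω k m, k ≤ m → Y k ω = t → Y m ω = t) :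
    expHit P t Y = ∑' k, P {ω | Y k ω ≠ t} := by
  have hmeas (k : ℕ) : MeasurableSet {ω | Y k ω ≠ t} :=
    (hY k (measurableSet_singleton t)).compl
  rw [expHit, lintegral_congr fun ω => hitTime_eq_tsum_indicator (habs ω),
    lintegral_tsum fun k => (measurable_one.indicator (hmeas k)).aemeasurable]
  exact tsum_congr fun k => lintegral_indicator_one (hmeas k)

lemma totalCost_eq_tsum {U : Type*} {f : X → U → ℝ} {π : X → U} (hY : ∀ k, Measurable (Y k))
    (habs : ∀ ω k m, k ≤ m → Y k ω = t → Y m ω = t)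
    (hfπ : Measurable fun y => f y (π y)) (hft : f t (π t) = 0) :
    totalCost P t f π Y = ∑' k, ∫⁻ ω, ENNReal.ofReal (f (Y k ω) (π (Y k ω))) ∂P := by
  have hterm (ω : Ω) (k : ℕ) : (if (k : ℝ≥0∞) < hitTime t Y ω
      then ENNReal.ofReal (f (Y k ω) (π (Y k ω))) else 0)
      = ENNReal.ofReal (f (Y k ω) (π (Y k ω))) := by
    rw [ite_eq_left_iff, lt_hitTime_iff (habs ω), not_not]
    intro hk
    rw [hk, hft, ENNReal.ofReal_zero]
  simp_rw [totalCost, hterm]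
  exact lintegral_tsum fun k => (hfπ.comp (hY k)).ennreal_ofReal.aemeasurable

end HitTime

section Drift

variable {X Ω : Type*} [MeasurableSpace X] [MeasurableSpace Ω] {P : Measure Ω} {t : X}

lemma integrable_comp_of_abs_le [IsFiniteMeasure P] {Z : Ω → X} (hZ : Measurable Z)
    {h : X → ℝ} (hh : Measurable h) {C : ℝ} (hC : ∀ y, |h y| ≤ C) :
    Integrable (fun ω => h (Z ω)) P :=
  .of_bound (hh.comp hZ).aestronglyMeasurable C (Eventually.of_forall fun _ => hC _)

lemma integral_add_integral_le_of_drift [MeasurableSingletonClass X] [IsFiniteMeasure P]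
    {Z : Ω → X} (hZ : Measurable Z) {a g L : X → ℝ} {c : ℝ}
    (ha : Integrable (fun ω => a (Z ω)) P) (hg : Integrable (fun ω => g (Z ω)) P)
    (hL : Integrable (fun ω => L (Z ω)) P) (hterm : a t + g t ≤ L t)
    (hdrift : ∀ y, y ≠ t → a y + g y ≤ L y + c) :
    ∫ ω, a (Z ω) ∂P + ∫ ω, g (Z ω) ∂P ≤ ∫ ω, L (Z ω) ∂P + c * P.real {ω | Z ω ≠ t} := by
  have hs : MeasurableSet {ω | Z ω ≠ t} := (hZ (measurableSet_singleton t)).compl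
  have hc : Integrable ({ω | Z ω ≠ t}.indicator fun _ => c) P := (integrable_const c).indicator hs
  rw [← integral_add ha hg, mul_comm, ← smul_eq_mul, ← integral_indicator_const c hs,
    ← integral_add hL hc]
  refine integral_mono (ha.add hg) (hL.add hc) fun ω => ?_
  by_cases hZt : Z ω = t
  · simpa [hZt] using hterm
  · simpa [hZt] using hdrift (Z ω) hZt

lemma tendsto_integral_comp_of_hitTime_lt_top [IsFiniteMeasure P] {Y : ℕ → Ω → X}
    (hY : ∀ k, Measurable (Y k)) (habs : ∀ ω k m, k ≤ m → Y k ω = t → Y m ω = t)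
    (hτ : ∀ᵐ ω ∂P, hitTime t Y ω < ⊤) {L : X → ℝ} (hL : Measurable L) {C : ℝ}
    (hC : ∀ y, |L y| ≤ C) (hLt : L t = 0) :
    Tendsto (fun n => ∫ ω, L (Y n ω) ∂P) atTop (nhds 0) := by
  rw [← integral_zero Ω ℝ]
  refine tendsto_integral_of_dominated_convergence (fun _ => C)
    (fun n => (hL.comp (hY n)).aestronglyMeasurable) (integrable_const C)
    (fun n => Eventually.of_forall fun ω => hC _) ?_
  filter_upwards [hτ] with ω hω
  obtain ⟨k, hk⟩ := hitTime_lt_top_iff.1 hω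
  exact tendsto_atTop_of_eventually_const (i₀ := k) fun m hm => by rw [habs ω k m hm hk, hLt]

end Drift

theorem totalCost_trajOn_le_of_drift {X U W Ω : Type*} [MeasurableSpace X]
    [MeasurableSingletonClass X] [MeasurableSpace W] [MeasurableSpace Ω] {μ : Measure W}
    [IsProbabilityMeasure μ] {P : Measure Ω} [IsProbabilityMeasure P] {t x : X}
    {F : X → U → W → X} {f : X → U → ℝ} {π : X → U} {ξ : ℕ → Ω → W}
    (hFπ : Measurable fun q : X × W => F q.1 (π q.1) q.2) (hfπ : Measurable fun y => f y (π y))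
    (hfnn : ∀ y, 0 ≤ f y (π y)) (hft : f t (π t) = 0) (hFt : ∀ w, F t (π t) w = t)
    (hξ : ∀ k, Measurable (ξ k)) (hind : iIndepFun ξ P) (hlaw : ∀ k, P.map (ξ k) = μ)
    (hτ : ∀ᵐ ω ∂P, hitTime t (trajOn F π x ξ) ω < ⊤) {L : X → ℝ} (hL : Measurable L) {C : ℝ}
    (hC : ∀ y, |L y| ≤ C) (hLt : L t = 0) {c : ℝ} (hc : 0 ≤ c)
    (hdrift : ∀ y, y ≠ t → f y (π y) + ∫ w, L (F y (π y) w) ∂μ ≤ L y + c) :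
    (totalCost P t f π (trajOn F π x ξ) : EReal)
      ≤ (L x : EReal) + ((ENNReal.ofReal c * expHit P t (trajOn F π x ξ) : ℝ≥0∞) : EReal) := by
  set Y := trajOn F π x ξ
  have hY : ∀ k, Measurable (Y k) := measurable_trajOn hFπ hξ
  have habs : ∀ ω k m, k ≤ m → Y k ω = t → Y m ω = t := fun ω _ _ => traj_eq_of_le hFt _
  have hnext (y : X) : |∫ w, L (F y (π y) w) ∂μ| ≤ C :=
    abs_integral_le_of_forall_abs_le fun _ => hC _
  have hterm : f t (π t) + ∫ w, L (F t (π t) w) ∂μ ≤ L t := by simp [hft, hFt, hLt]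
  have hcost (k : ℕ) : Integrable (fun ω => f (Y k ω) (π (Y k ω))) P := by
    refine integrable_comp_of_abs_le (hY k) hfπ (C := 2 * C + c) fun y => ?_
    have hy : f y (π y) + ∫ w, L (F y (π y) w) ∂μ ≤ L y + c := by
      by_cases hyt : y = t
      · subst hyt; linarith
      · exact hdrift y hyt
    rw [abs_of_nonneg (hfnn y)]
    linarith [abs_le.1 (hC y), abs_le.1 (hnext y)]
  have hstep (k : ℕ) : ∫ ω, f (Y k ω) (π (Y k ω)) ∂P + ∫ ω, L (Y (k + 1) ω) ∂P
      ≤ ∫ ω, L (Y k ω) ∂P + (ENNReal.ofReal c * P {ω | Y k ω ≠ t}).toReal := by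
    rw [integral_comp_trajOn_succ hFπ hξ hind hlaw hL hC k, ENNReal.toReal_mul,
      ENNReal.toReal_ofReal hc]
    exact integral_add_integral_le_of_drift (hY k) (hcost k)
      (integrable_comp_of_abs_le (hY k)
        (hL.comp hFπ).stronglyMeasurable.integral_prod_right'.measurable hnext)
      (integrable_comp_of_abs_le (hY k) hL hC) hterm hdrift
  have hv0 : L x = ∫ ω, L (Y 0 ω) ∂P := by simp [Y, trajOn, traj]
  rw [totalCost_eq_tsum hY habs hfπ hft, expHit_eq_tsum hY habs, ← ENNReal.tsum_mul_left, hv0]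
  simp_rw [← ofReal_integral_eq_lintegral_ofReal (hcost _) (Eventually.of_forall fun _ => hfnn _)]
  exact coe_tsum_ofReal_le_of_telescoping (fun k => integral_nonneg fun _ => hfnn _) hstep
    (tendsto_integral_comp_of_hitTime_lt_top hY habs hτ hL hC hLt)

theorem rollout_bound_eta_greedy_general
    {X U W Ω : Type*} [MeasurableSpace X] [MeasurableSingletonClass X]
    [MeasurableSpace U] [MeasurableSpace W] [MeasurableSpace Ω]
    (μ : Measure W) [IsProbabilityMeasure μ] (P : Measure Ω) [IsProbabilityMeasure P]
    (t : X) (u0 : U) (Ua : X → Set U) (F : X → U → W → X) (f : X → U → ℝ)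
    -- SSP model: nonempty control sets, nonnegative measurable stage cost, measurable dynamics,
    -- absorbing cost-free terminal state
    (hfnn : ∀ y u, 0 ≤ f y u)
    (hFmeas : Measurable fun p : X × U × W => F p.1 p.2.1 p.2.2)
    (hfmeas : Measurable fun p : X × U => f p.1 p.2)
    (hft : f t u0 = 0) (hFt : ∀ w, F t u0 w = t)
    -- V* : bounded measurable, V*(t)=0, Bellman fixed point, well-defined one-step integrals
    (Vstar : X → ℝ) (hVsmeas : Measurable Vstar) (hVsbdd : ∃ C, ∀ y, |Vstar y| ≤ C)
    (hVst : Vstar t = 0) (hVsfix : ∀ y, Vstar y = bellman μ t Ua f F Vstar y)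
    (hVsint : ∀ y u, Integrable (fun w => Vstar (F y u w)) μ)
    -- V : bounded measurable surrogate with V(t)=0 and ‖V - V*‖∞ ≤ ε
    (V : X → ℝ) (hVint : ∀ y u, Integrable (fun w => V (F y u w)) μ)
    (ε : ℝ) (hε : 0 ≤ ε) (happrox : ∀ y, |V y - Vstar y| ≤ ε)
    (π : X → U) (hπmeas : Measurable π) (hπt : π t = u0)
    (η : ℝ) (hη : 0 ≤ η)
    (hηgreedy : ∀ y, y ≠ t → π y ∈ Ua y ∧
      f y (π y) + ∫ w, V (F y (π y) w) ∂μ ≤ bellman μ t Ua f F V y + η)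
    -- i.i.d. disturbance sequence with common law μ on an abstract probability space
    (ξ : ℕ → Ω → W) (hξmeas : ∀ k, Measurable (ξ k))
    (hξindep : iIndepFun ξ P)
    (hξlaw : ∀ k, P.map (ξ k) = μ)
    -- properness of the closed loop from x: τ < ∞ a.s. and J(x) < ∞
    (x : X)
    (hproper_tau : ∀ᵐ ω ∂P, hitTime t (trajOn F π x ξ) ω < ⊤) :
    (totalCost P t f π (trajOn F π x ξ) : EReal)
      ≤ (Vstar x : EReal) +
        ((ENNReal.ofReal (2 * ε + η) * expHit P t (trajOn F π x ξ) : ℝ≥0∞) : EReal) := by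
  obtain ⟨C, hC⟩ := hVsbdd
  subst hπt
  have hFπ : Measurable fun q : X × W => F q.1 (π q.1) q.2 :=
    hFmeas.comp (measurable_fst.prodMk ((hπmeas.comp measurable_fst).prodMk measurable_snd))
  refine totalCost_trajOn_le_of_drift hFπ (hfmeas.comp (measurable_id.prodMk hπmeas))
    (fun y => hfnn y _) hft hFt hξmeas hξindep hξlaw hproper_tau hVsmeas hC hVst
    (by linarith) fun y hy => ?_
  exact qfactor_le_add_of_approx_greedy hy (hfnn y) hC (hVsfix y) (hVsint y) (hVint y) happrox
    (hηgreedy y hy).1 (hηgreedy y hy).2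

/-- η-greedy variant of the rollout bound: if the policy `π` is only η-approximately greedy,
i.e. `f(x', π(x')) + ∫ V(F(x', π(x'), w)) dμ(w) ≤ (T V)(x') + η` at every nonterminal `x'`,
and `π` is proper from `x`, then `J^π(x) - V*(x) ≤ (2ε + η) · E[τ]`, stated in `EReal`. -/
theorem rollout_bound_eta_greedy
    {X U W Ω : Type*} [MeasurableSpace X] [MeasurableSingletonClass X]
    [MeasurableSpace U] [MeasurableSpace W] [MeasurableSpace Ω]
    (μ : Measure W) [IsProbabilityMeasure μ] (P : Measure Ω) [IsProbabilityMeasure P]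
    (t : X) (u0 : U) (Ua : X → Set U) (F : X → U → W → X) (f : X → U → ℝ)
    -- SSP model: nonempty control sets, nonnegative measurable stage cost, measurable dynamics,
    -- absorbing cost-free terminal state
    (hUne : ∀ y, (Ua y).Nonempty) (hfnn : ∀ y u, 0 ≤ f y u)
    (hFmeas : Measurable fun p : X × U × W => F p.1 p.2.1 p.2.2)
    (hfmeas : Measurable fun p : X × U => f p.1 p.2)
    (hUt : Ua t = {u0}) (hft : f t u0 = 0) (hFt : ∀ w, F t u0 w = t)
    -- V* : bounded measurable, V*(t)=0, Bellman fixed point, well-defined one-step integrals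
    (Vstar : X → ℝ) (hVsmeas : Measurable Vstar) (hVsbdd : ∃ C, ∀ y, |Vstar y| ≤ C)
    (hVst : Vstar t = 0) (hVsfix : ∀ y, Vstar y = bellman μ t Ua f F Vstar y)
    (hVsint : ∀ y u, Integrable (fun w => Vstar (F y u w)) μ)
    -- V : bounded measurable surrogate with V(t)=0 and ‖V - V*‖∞ ≤ ε
    (V : X → ℝ) (hVmeas : Measurable V) (hVbdd : ∃ C, ∀ y, |V y| ≤ C) (hVt : V t = 0)
    (hVint : ∀ y u, Integrable (fun w => V (F y u w)) μ)
    (ε : ℝ) (hε : 0 ≤ ε) (happrox : ∀ y, |V y - Vstar y| ≤ ε)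
    (π : X → U) (hπmeas : Measurable π) (hπt : π t = u0)
    (η : ℝ) (hη : 0 ≤ η)
    (hηgreedy : ∀ y, y ≠ t → π y ∈ Ua y ∧
      f y (π y) + ∫ w, V (F y (π y) w) ∂μ ≤ bellman μ t Ua f F V y + η)
    -- i.i.d. disturbance sequence with common law μ on an abstract probability space
    (ξ : ℕ → Ω → W) (hξmeas : ∀ k, Measurable (ξ k))
    (hξindep : iIndepFun ξ P)
    (hξlaw : ∀ k, P.map (ξ k) = μ)
    -- properness of the closed loop from x: τ < ∞ a.s. and J(x) < ∞
    (x : X)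
    (hproper_tau : ∀ᵐ ω ∂P, hitTime t (trajOn F π x ξ) ω < ⊤)
    (hproper_J : totalCost P t f π (trajOn F π x ξ) < ⊤) :
    (totalCost P t f π (trajOn F π x ξ) : EReal)
      ≤ (Vstar x : EReal) +
        ((ENNReal.ofReal (2 * ε + η) * expHit P t (trajOn F π x ξ) : ℝ≥0∞) : EReal) :=
  rollout_bound_eta_greedy_general μ P t u0 Ua F f hfnn hFmeas hfmeas hft hFt Vstar hVsmeas hVsbdd
    hVst hVsfix hVsint V hVint ε hε happrox π hπmeas hπt η hη hηgreedy ξ hξmeas hξindep hξlaw x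
    hproper_tau
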